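/- Strong Bernoulli Property: let ℙ be a Bernoulli measure on ∂M, let V : ∂M → M̄ be an asynchronous stopping time, and let ψ : ∂M → ℝ be an 𝔉-measurable function that is either nonnegative or ℙ-integrable; extend ψ∘θ_V by the value 0 on the set {ξ : ξ_V ∉ M}. Then E(ψ∘θ_V | 𝔉_V) = E(ψ) holds ℙ-almost surely on the event {ξ : ξ_V ∈ M}, where E denotes expectation with respect to ℙ. -/

import Mathlib

open MeasureTheory Filter
open scoped ENNReal NNReal

namespace HeapPaper

variable {S : Type}

/-- Commutation pairs of words, generating the trace congruence. -/
def CommRel (I : S → S → Prop) (w₁ w₂ : FreeMonoid S) : Prop :=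
  ∃ a b : S, I a b ∧ w₁ = FreeMonoid.of a * FreeMonoid.of b ∧
    w₂ = FreeMonoid.of b * FreeMonoid.of a

/-- The congruence on the free monoid generated by the commutation of independent pieces. -/
def HeapCon (I : S → S → Prop) : Con (FreeMonoid S) := conGen (CommRel I)

/-- The heap monoid `M(Σ, I)`:  the presented monoid `⟨Σ | ab = ba, (a,b) ∈ I⟩`. -/
def Heap (I : S → S → Prop) := (HeapCon I).Quotient

instance (I : S → S → Prop) : Monoid (Heap I) :=
  inferInstanceAs (Monoid (HeapCon I).Quotient)

/-- The unique additive extension to heaps of a function `φ` defined on pieces. -/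
def addExt {A : Type} [AddCommMonoid A] {I : S → S → Prop} (φ : S → A) : Heap I → A :=
  fun x => Multiplicative.toAdd <|
    (Con.lift (HeapCon I) (FreeMonoid.lift fun a => Multiplicative.ofAdd (φ a))
      (Con.conGen_le.mpr (by
        rintro w₁ w₂ ⟨a, b, hab, rfl, rfl⟩
        exact (Con.ker_rel _).mpr (by simp [map_mul, mul_comm])))) x

/-- The length `|x|` of a heap: the common length of its representative words. -/
def len {I : S → S → Prop} (x : Heap I) : ℕ := addExt (fun _ => 1) x

/-- The number `|x|ₐ` of occurrences of the piece `a` in the heap `x`. -/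
def occ {I : S → S → Prop} [DecidableEq S] (a : S) (x : Heap I) : ℕ :=
  addExt (fun b => if b = a then 1 else 0) x

/-- The additive extension `⟨φ, x⟩` of a real-valued cost function. -/
def pairing {I : S → S → Prop} (φ : S → ℝ) (x : Heap I) : ℝ := addExt φ x

/-- The left-divisibility order on the heap monoid. -/
def hLe {I : S → S → Prop} (x y : Heap I) : Prop := ∃ z : Heap I, y = x * z

/-- Cliques: finite sets of pairwise independent pieces. -/
def Cl (I : S → S → Prop) := {s : Finset S // ∀ a ∈ s, ∀ b ∈ s, a ≠ b → I a b}

/-- The empty clique. -/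
def emptyCl (I : S → S → Prop) : Cl I := ⟨∅, by simp⟩

/-- The heap associated with a clique (product of its pieces, in any order). -/
def Cl.heap {I : S → S → Prop} (γ : Cl I) : Heap I :=
  γ.1.noncommProd (fun a => (HeapCon I).mk' (FreeMonoid.of a)) (by
    intro a ha b hb hab
    have hI : I a b := γ.2 a ha b hb hab
    show (HeapCon I).mk' (FreeMonoid.of a) * (HeapCon I).mk' (FreeMonoid.of b)
        = (HeapCon I).mk' (FreeMonoid.of b) * (HeapCon I).mk' (FreeMonoid.of a)
    rw [← map_mul, ← map_mul]
    exact (Con.eq _).mpr (ConGen.Rel.of _ _ ⟨a, b, hI, rfl, rfl⟩))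

/-- The Cartier–Foata move relation `γ → γ'` between cliques. -/
def Move {I : S → S → Prop} (γ γ' : Cl I) : Prop :=
  ∀ b ∈ γ'.1, ∃ a ∈ γ.1, ¬ I a b

/-- The boundary `∂M`: infinite admissible sequences of nonempty cliques. -/
def Bnd (I : S → S → Prop) :=
  {ξ : ℕ → Cl I // (∀ n, (ξ n).1.Nonempty) ∧ ∀ n, Move (ξ n) (ξ (n + 1))}

/-- `M̄ = M ∪ ∂M`. -/
def MB (I : S → S → Prop) := Heap I ⊕ Bnd I

/-- Partial products of a sequence of cliques. -/
def ppSeq {I : S → S → Prop} (c : ℕ → Cl I) (n : ℕ) : Heap I :=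
  ((List.range n).map fun i => (c i).heap).prod

/-- `c` is the Cartier–Foata decomposition of the heap `x`, padded with empty cliques:
`c` is admissible, eventually empty, with partial products eventually equal to `x`. -/
def CFprop (I : S → S → Prop) (c : ℕ → Cl I) (x : Heap I) : Prop :=
  (∀ n, Move (c n) (c (n + 1))) ∧
    ∃ N, ∀ n, N ≤ n → ppSeq c n = x ∧ c n = emptyCl I

/-- The (padded) Cartier–Foata decomposition of a heap. -/
noncomputable def cf (I : S → S → Prop) (x : Heap I) : ℕ → Cl I :=
  letI := Classical.propDecidable (∃ c, CFprop I c x)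
  if h : ∃ c, CFprop I c x then h.choose else fun _ => emptyCl I

/-- The Cartier–Foata sequence of an element of `M̄`. -/
noncomputable def seqOf {I : S → S → Prop} : MB I → ℕ → Cl I
  | .inl x => cf I x
  | .inr ξ => ξ.1

/-- Partial products of the Cartier–Foata sequence of an element of `M̄`. -/
noncomputable def pp {I : S → S → Prop} (ζ : MB I) (n : ℕ) : Heap I :=
  ppSeq (seqOf ζ) n

/-- The order on `M̄`: `ξ ≤ ξ'` iff `γ₁⋯γₙ ≤ γ'₁⋯γ'ₙ` in `M` for all `n`. -/
noncomputable def mLe {I : S → S → Prop} (ζ ζ' : MB I) : Prop :=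
  ∀ n : ℕ, hLe (pp ζ n) (pp ζ' n)

/-- The elementary cylinder `↑x ⊆ ∂M` of base `x ∈ M`. -/
noncomputable def cyl {I : S → S → Prop} (x : Heap I) : Set (Bnd I) :=
  {ξ : Bnd I | mLe (.inl x) (.inr ξ)}

/-- The σ-algebra `𝔉` on `∂M` generated by the elementary cylinders. -/
noncomputable def Fsa (I : S → S → Prop) : MeasurableSpace (Bnd I) :=
  MeasurableSpace.generateFrom {A : Set (Bnd I) | ∃ x : Heap I, A = cyl x}

noncomputable instance (I : S → S → Prop) : MeasurableSpace (Bnd I) := Fsa I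

/-- `ζ` is the least upper bound in `M̄` of the nondecreasing sequence `(x·γ₁⋯γₙ)ₙ`,
where `(γₙ)` is the Cartier–Foata sequence of `ξ`; this characterizes `x·ξ`. -/
noncomputable def IsConc {I : S → S → Prop} (x : Heap I) (ξ : Bnd I) (ζ : MB I) : Prop :=
  (∀ n : ℕ, mLe (.inl (x * pp (.inr ξ) n)) ζ) ∧
    ∀ η : MB I, (∀ n : ℕ, mLe (.inl (x * pp (.inr ξ) n)) η) → mLe ζ η

/-- The concatenation `x·ξ ∈ ∂M` of a heap `x` and an infinite heap `ξ`. -/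
noncomputable def concB {I : S → S → Prop} (x : Heap I) (ξ : Bnd I) : Bnd I :=
  letI := Classical.propDecidable (∃ ζ : Bnd I, IsConc x ξ (.inr ζ))
  if h : ∃ ζ : Bnd I, IsConc x ξ (.inr ζ) then h.choose else ξ

/-- The difference `ξ − x`: the unique `ζ ∈ ∂M` with `x·ζ = ξ` (junk value if none exists). -/
noncomputable def subB {I : S → S → Prop} (ξ : Bnd I) (x : Heap I) : Bnd I :=
  letI := Classical.propDecidable (∃ ζ : Bnd I, concB x ζ = ξ)
  if h : ∃ ζ : Bnd I, concB x ζ = ξ then h.choose else ξ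

/-- Asynchronous stopping time. -/
noncomputable def IsAST {I : S → S → Prop} (V : Bnd I → MB I) : Prop :=
  (∀ ξ : Bnd I, mLe (V ξ) (.inr ξ)) ∧
    ∀ (ξ ξ' : Bnd I) (x : Heap I), V ξ = .inl x → mLe (.inl x) (.inr ξ') → V ξ' = V ξ

/-- The shift operator `θ_V` associated with an AST `V` (junk: identity outside its domain). -/
noncomputable def shiftV {I : S → S → Prop} (V : Bnd I → MB I) (ξ : Bnd I) : Bnd I :=
  match V ξ with
  | .inl x => subB ξ x
  | .inr _ => ξ

/-- The σ-algebra `𝔉_V` generated by the cylinders of the finite values of `V`. -/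
noncomputable def astSA {I : S → S → Prop} (V : Bnd I → MB I) : MeasurableSpace (Bnd I) :=
  MeasurableSpace.generateFrom
    {A : Set (Bnd I) | ∃ x : Heap I, (∃ ξ : Bnd I, V ξ = .inl x) ∧ A = cyl x}

/-- The iterated sequence `(Vₙ)ₙ` of an AST `V`:  `V₀ = 0` and
`V_{n+1}(ξ) = Vₙ(ξ)·V(ξ − Vₙ(ξ))` if `Vₙ(ξ) ∈ M`, `V_{n+1}(ξ) = ξ` otherwise. -/
noncomputable def iter {I : S → S → Prop} (V : Bnd I → MB I) : ℕ → Bnd I → MB I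
  | 0, _ => .inl 1
  | n + 1, ξ =>
    match iter V n ξ with
    | .inl x =>
      match V (subB ξ x) with
      | .inl y => .inl (x * y)
      | .inr ζ => .inr (concB x ζ)
    | .inr _ => .inr ξ

/-- The increment `Δ_{n+1} = V ∘ θ_{Vₙ}` (junk value outside the domain of `θ_{Vₙ}`). -/
noncomputable def Delta {I : S → S → Prop} (V : Bnd I → MB I) (n : ℕ) (ξ : Bnd I) : MB I :=
  match iter V n ξ with
  | .inl x => V (subB ξ x)
  | .inr _ => .inr ξ

/-- The length of an element of `M̄`, with `|ξ| = ∞` for `ξ ∈ ∂M`. -/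
noncomputable def lenE {I : S → S → Prop} : MB I → ℝ≥0∞
  | .inl x => (len x : ℝ≥0∞)
  | .inr _ => ⊤

/-- `E|V| < ∞`. -/
noncomputable def EVfin {I : S → S → Prop} (P : Measure (Bnd I)) (V : Bnd I → MB I) : Prop :=
  ∫⁻ ξ, lenE (V ξ) ∂P < ⊤

/-- The AST `V` is exhaustive: it is `ℙ`-a.s. finite and `ℙ`-a.s. `ξ = ⋁ₙ Vₙ(ξ)`
(`ξ` is the least upper bound of its iterates). -/
noncomputable def Exhaustive {I : S → S → Prop} (P : Measure (Bnd I)) (V : Bnd I → MB I) : Prop :=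
  (∀ᵐ ξ ∂P, ∃ x : Heap I, V ξ = .inl x) ∧
    ∀ᵐ ξ ∂P, (∀ n : ℕ, mLe (iter V n ξ) (.inr ξ)) ∧
      ∀ ζ : MB I, (∀ n : ℕ, mLe (iter V n ξ) ζ) → mLe (.inr ξ) ζ

/-- `ℙ` is a Bernoulli measure: a probability measure on `(∂M, 𝔉)` that is multiplicative
and positive on elementary cylinders. -/
noncomputable def IsBernoulli {I : S → S → Prop} (P : Measure (Bnd I)) : Prop :=
  IsProbabilityMeasure P ∧
    (∀ x y : Heap I, P (cyl (x * y)) = P (cyl x) * P (cyl y)) ∧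
    ∀ x : Heap I, 0 < P (cyl x)

/-- `ζ` is the greatest lower bound, within the complete lattice `L(ξ)`, of the set
`Hₐ(ξ)` of finite subheaps of `ξ` containing an occurrence of `a`:  this characterizes
the first hitting time of `a`. -/
noncomputable def IsHit {I : S → S → Prop} [DecidableEq S] (a : S) (ξ : Bnd I) (ζ : MB I) :
    Prop :=
  mLe ζ (.inr ξ) ∧
    (∀ x : Heap I, mLe (.inl x) (.inr ξ) → 0 < occ a x → mLe ζ (.inl x)) ∧
    ∀ η : MB I, mLe η (.inr ξ) →
      (∀ x : Heap I, mLe (.inl x) (.inr ξ) → 0 < occ a x → mLe η (.inl x)) → mLe η ζ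

/-- The first hitting time of the piece `a`. -/
noncomputable def hit {I : S → S → Prop} [DecidableEq S] (a : S) (ξ : Bnd I) : MB I :=
  letI := Classical.propDecidable (∃ ζ : MB I, IsHit a ξ ζ)
  if h : ∃ ζ : MB I, IsHit a ξ ζ then h.choose else .inr ξ

/-- A maximal clique: a maximal element of `(𝒞, ≤)`. -/
noncomputable def IsMaxCl {I : S → S → Prop} (γ : Cl I) : Prop :=
  ∀ δ : Cl I, hLe γ.heap δ.heap → δ.heap = γ.heap

/-- The AST cutting an infinite heap at the first occurrence of a maximal clique. -/
noncomputable def Vmax {I : S → S → Prop} (ξ : Bnd I) : MB I :=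
  letI := Classical.propDecidable
  if h : ∃ k : ℕ, IsMaxCl (ξ.1 k) then .inl (ppSeq ξ.1 (Nat.find h + 1)) else .inr ξ

/-- The ergodic mean `⟨φ, x⟩ / |x|` (junk value `0` on infinite heaps). -/
noncomputable def ratioC {I : S → S → Prop} (φ : S → ℝ) : MB I → ℝ
  | .inl x => pairing φ x / (len x : ℝ)
  | .inr _ => 0

/-- The ratio `φ(x)/|x|` for `φ` defined on heaps (junk value `0` on infinite heaps). -/
noncomputable def ratioH {I : S → S → Prop} (φ : Heap I → ℝ) : MB I → ℝ
  | .inl x => φ x / (len x : ℝ)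
  | .inr _ => 0

/-- The set `ℭ` of nonempty cliques. -/
def NCl (I : S → S → Prop) := {γ : Cl I // γ.1.Nonempty}

instance [Fintype S] (I : S → S → Prop) : Finite (Cl I) :=
  inferInstanceAs (Finite {s : Finset S // ∀ a ∈ s, ∀ b ∈ s, a ≠ b → I a b})

instance [Fintype S] (I : S → S → Prop) : Finite (NCl I) :=
  inferInstanceAs (Finite {γ : Cl I // γ.1.Nonempty})

/-- The valuation `f(x) = ℙ(↑x)` associated with `ℙ`. -/
noncomputable def fval {I : S → S → Prop} (P : Measure (Bnd I)) (x : Heap I) : ℝ :=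
  (P (cyl x)).toReal

open Classical in
/-- The Möbius transform `h` of the valuation `f` associated with `ℙ`. -/
noncomputable def mobius {I : S → S → Prop} (P : Measure (Bnd I)) (γ : Cl I) : ℝ :=
  ∑ᶠ γ' : Cl I,
    if hLe γ.heap γ'.heap then (-1 : ℝ) ^ (γ'.1.card - γ.1.card) * fval P γ'.heap else 0

open Classical in
/-- The normalization `g(γ) = Σ_{γ'∈ℭ, γ→γ'} h(γ')`. -/
noncomputable def gnorm {I : S → S → Prop} (P : Measure (Bnd I)) (γ : Cl I) : ℝ :=
  ∑ᶠ γ' : Cl I, if γ'.1.Nonempty ∧ Move γ γ' then mobius P γ' else 0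

open Classical in
/-- The transition matrix of the Markov chain of cliques. -/
noncomputable def Pmat {I : S → S → Prop} (P : Measure (Bnd I)) (γ γ' : Cl I) : ℝ :=
  if Move γ γ' then mobius P γ' / gnorm P γ else 0

/-- `π` is a stationary probability distribution, carried by the nonempty cliques, of the
Markov chain of cliques. -/
noncomputable def IsStationary {I : S → S → Prop} (P : Measure (Bnd I)) (π : Cl I → ℝ) :
    Prop :=
  (∀ γ : Cl I, 0 ≤ π γ) ∧ (π (emptyCl I) = 0) ∧ (∑ᶠ γ : Cl I, π γ = 1) ∧
    ∀ γ' : Cl I, π γ' = ∑ᶠ γ : Cl I, π γ * Pmat P γ γ'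

open Classical in
/-- The nonnegative matrix `B` on `ℭ×ℭ`: `B_{γ,γ'} = f(γ')` if `γ → γ'`, else `0`. -/
noncomputable def Bmat {I : S → S → Prop} (P : Measure (Bnd I)) :
    Matrix (NCl I) (NCl I) ℝ :=
  fun γ γ' => if Move γ.1 γ'.1 then fval P γ'.1.heap else 0

/-- The spectral radius of `B` (as a complex matrix). -/
noncomputable def specRadB [Fintype S] {I : S → S → Prop} (P : Measure (Bnd I)) : ℝ≥0∞ :=
  letI : Fintype (NCl I) := Fintype.ofFinite _
  letI : DecidableEq (NCl I) := Classical.decEq _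
  spectralRadius ℂ ((Bmat P).map (algebraMap ℝ ℂ))

/-- The height `τ(x)` of a heap: the number of cliques in its Cartier–Foata decomposition. -/
noncomputable def height {I : S → S → Prop} (x : Heap I) : ℕ :=
  sInf {N : ℕ | ∀ n, N ≤ n → cf I x n = emptyCl I}

/-- The ratio `|x|/τ(x)` (junk value `0` on infinite heaps). -/
noncomputable def speedRatio {I : S → S → Prop} : MB I → ℝ
  | .inl x => (len x : ℝ) / (height x : ℝ)
  | .inr _ => 0

/-- `ψ ∘ θ_V` extended by `0` outside the domain of `θ_V`. -/
noncomputable def extShift {I : S → S → Prop} (V : Bnd I → MB I) (ψ : Bnd I → ℝ)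
    (η : Bnd I) : ℝ :=
  match V η with
  | .inl _ => ψ (shiftV V η)
  | .inr _ => 0

/-!
On a cylinder `↑x` whose base `x` is a finite value of the stopping time `V`, the AST property
forces `V ≡ x`, hence `ψ ∘ θ_V = ψ(· − x)`; these cylinders are pairwise disjoint and generate
`𝔉_V`. The Bernoulli property `ℙ(↑(x·z)) = ℙ(↑x) ℙ(↑z)` says that `ξ ↦ ξ − x` maps `ℙ` restricted
to `↑x` onto `ℙ(↑x) • ℙ`: the two measures agree on cylinders, which form a π-system because two
divisors of a common heap have a least common multiple. Hence `∫_{↑x} ψ ∘ θ_V dℙ = ℙ(↑x) E(ψ)`,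
which identifies `E(ψ ∘ θ_V | 𝔉_V)` with `E(ψ)` on `{V ∈ M}`. (For non-integrable `ψ`, the map
`ψ ∘ θ_V` is not integrable either, and both sides are `0` by convention.)

The combinatorial input is the description of cylinders by divisibility, `ξ ∈ ↑y` iff `y` divides
some `γ₁⋯γₙ`, which rests on a maximality property of Cartier–Foata prefixes: the product of the
first `k` cliques of `t` is the largest divisor of `t` that is a product of `k` cliques.
Cancellativity of `M` comes from the projections of words onto pairs of dependent pieces.
-/

variable {I : S → S → Prop}

open Set Function

section RegenerationOnPartitions

lemma isPiSystem_range_of_pairwise_disjoint {Ω ι : Type*} {C : ι → Set Ω}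
    (hdisj : Pairwise (Disjoint on C)) : IsPiSystem (range C) := by
  rintro _ ⟨i, rfl⟩ _ ⟨j, rfl⟩ hij
  obtain rfl : i = j := by_contra fun h => hij.ne_empty (hdisj h).inter_eq
  exact ⟨i, (inter_self _).symm⟩

variable {Ω ι : Type*} [MeasurableSpace Ω] {μ : Measure Ω} [Countable ι] {C : ι → Set Ω}

lemma measurable_of_eqOn_iUnion {β : Type*} [MeasurableSpace β] (hC : ∀ i, MeasurableSet (C i))
    {f : Ω → β} {g : ι → Ω → β} (hg : ∀ i, Measurable (g i)) (hfg : ∀ i, EqOn f (g i) (C i))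
    {b : β} (hb : EqOn f (fun _ => b) (⋃ i, C i)ᶜ) : Measurable f := by
  intro t ht
  have hpre : f ⁻¹' t = (⋃ i, C i ∩ g i ⁻¹' t) ∪ ((⋃ i, C i)ᶜ ∩ (fun _ => b) ⁻¹' t) := by
    ext ω
    by_cases hω : ω ∈ ⋃ i, C i
    · obtain ⟨i, hi⟩ := mem_iUnion.mp hω
      simp only [mem_preimage, mem_union, mem_iUnion, mem_inter_iff, mem_compl_iff, hω,
        not_true_eq_false, false_and, or_false]
      exact ⟨fun h => ⟨i, hi, hfg i hi ▸ h⟩, fun ⟨j, hj, h⟩ => hfg j hj ▸ h⟩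
    · simp only [mem_preimage, mem_union, mem_iUnion, mem_inter_iff, mem_compl_iff, hω,
        not_false_eq_true, true_and, hb hω]
      exact ⟨.inr, fun h => h.resolve_left fun ⟨i, hi, _⟩ => hω (mem_iUnion_of_mem i hi)⟩
  rw [hpre]
  exact .union (.iUnion fun i => (hC i).inter (hg i ht))
    ((MeasurableSet.iUnion hC).compl.inter (measurable_const ht))

lemma condExp_generateFrom_range_ae_eq [IsFiniteMeasure μ] (hC : ∀ i, MeasurableSet (C i))
    (hdisj : Pairwise (Disjoint on C)) {f : Ω → ℝ} (hf : Integrable f μ)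
    (hoff : EqOn f 0 (⋃ i, C i)ᶜ) {c : ℝ} (hfC : ∀ i, ∫ ω in C i, f ω ∂μ = μ.real (C i) * c) :
    μ[f | MeasurableSpace.generateFrom (range C)] =ᵐ[μ] (⋃ i, C i).indicator fun _ => c := by
  set D := ⋃ i, C i
  set g : Ω → ℝ := D.indicator fun _ => c
  have hm : MeasurableSpace.generateFrom (range C) ≤ ‹MeasurableSpace Ω› :=
    MeasurableSpace.generateFrom_le (forall_mem_range.mpr hC)
  have hDm : MeasurableSet[MeasurableSpace.generateFrom (range C)] D :=
    .iUnion fun i => MeasurableSpace.measurableSet_generateFrom (mem_range_self i)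
  have hD : MeasurableSet D := hm _ hDm
  have hg : Integrable g μ := (integrable_const c).indicator hD
  have hgC : ∀ i, ∫ ω in C i, g ω ∂μ = ∫ ω in C i, f ω ∂μ := fun i => by
    rw [hfC, setIntegral_congr_fun (hC i) fun ω hω => indicator_of_mem (mem_iUnion_of_mem i hω) _,
      setIntegral_const, smul_eq_mul]
  have hgD : ∫ ω in D, g ω ∂μ = ∫ ω in D, f ω ∂μ := by
    rw [integral_iUnion hC hdisj hg.integrableOn, integral_iUnion hC hdisj hf.integrableOn]
    exact tsum_congr hgC
  have htotal : ∫ ω, g ω ∂μ = ∫ ω, f ω ∂μ := by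
    rw [← integral_add_compl hD hg, ← integral_add_compl hD hf, hgD,
      setIntegral_congr_fun hD.compl fun ω hω => indicator_of_notMem hω _,
      setIntegral_congr_fun hD.compl hoff]
    simp
  have hgf : ∀ s, MeasurableSet[MeasurableSpace.generateFrom (range C)] s →
      ∫ ω in s, g ω ∂μ = ∫ ω in s, f ω ∂μ := by
    intro s hs
    induction s, hs using MeasurableSpace.induction_on_inter rfl
        (isPiSystem_range_of_pairwise_disjoint hdisj) with
    | empty => simp
    | basic t ht => obtain ⟨i, rfl⟩ := ht; exact hgC i
    | compl t htm ih =>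
      rw [setIntegral_compl (hm _ htm) hg, setIntegral_compl (hm _ htm) hf, ih, htotal]
    | iUnion t htd htm ih =>
      rw [integral_iUnion (fun i => hm _ (htm i)) htd hg.integrableOn,
        integral_iUnion (fun i => hm _ (htm i)) htd hf.integrableOn]
      exact tsum_congr ih
  exact (ae_eq_condExp_of_forall_setIntegral_eq hm hf (fun _ _ _ => hg.integrableOn)
    (fun s hs _ => hgf s hs) (stronglyMeasurable_const.indicator hDm).aestronglyMeasurable).symm

lemma setLIntegral_comp_of_map_restrict {s : Set Ω} {T : Ω → Ω} (hT : Measurable T)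
    (hmap : (μ.restrict s).map T = μ s • μ) {g : Ω → ℝ≥0∞} (hg : Measurable g) :
    ∫⁻ ω in s, g (T ω) ∂μ = μ s * ∫⁻ ω, g ω ∂μ := by
  rw [← lintegral_map hg hT, hmap, lintegral_smul_measure, smul_eq_mul]

lemma setIntegral_comp_of_map_restrict {s : Set Ω} {T : Ω → Ω} (hT : Measurable T)
    (hmap : (μ.restrict s).map T = μ s • μ) {g : Ω → ℝ} (hg : Measurable g) :
    ∫ ω in s, g (T ω) ∂μ = μ.real s * ∫ ω, g ω ∂μ := by
  rw [← integral_map hT.aemeasurable (hmap ▸ hg.aestronglyMeasurable), hmap,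
    integral_smul_measure, smul_eq_mul, measureReal_def]

lemma lintegral_enorm_of_eqOn_comp (hC : ∀ i, MeasurableSet (C i))
    (hdisj : Pairwise (Disjoint on C)) {T : ι → Ω → Ω} (hT : ∀ i, Measurable (T i))
    (hmap : ∀ i, (μ.restrict (C i)).map (T i) = μ (C i) • μ) {ψ f : Ω → ℝ} (hψ : Measurable ψ)
    (hon : ∀ i, EqOn f (ψ ∘ T i) (C i)) (hoff : EqOn f 0 (⋃ i, C i)ᶜ) :
    ∫⁻ ω, ‖f ω‖ₑ ∂μ = μ (⋃ i, C i) * ∫⁻ ω, ‖ψ ω‖ₑ ∂μ := by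
  have hD := MeasurableSet.iUnion hC
  rw [← lintegral_add_compl _ hD, setLIntegral_congr_fun hD.compl fun ω hω => by
      rw [hoff hω, Pi.zero_apply, enorm_zero],
    lintegral_zero, add_zero, lintegral_iUnion hC hdisj, measure_iUnion hdisj hC,
    ← ENNReal.tsum_mul_right]
  refine tsum_congr fun i => ?_
  rw [setLIntegral_congr_fun (hC i) fun ω hω => by rw [hon i hω, comp_apply],
    setLIntegral_comp_of_map_restrict (hT i) (hmap i) hψ.enorm]

end RegenerationOnPartitions

namespace Heap

variable (I) in
def piece (a : S) : Heap I := (HeapCon I).mk' (FreeMonoid.of a)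

variable (I) in
def ofList (l : List S) : Heap I := (HeapCon I).mk' (FreeMonoid.ofList l)

lemma ofList_nil : ofList I [] = 1 := map_one _

lemma ofList_append (l m : List S) : ofList I (l ++ m) = ofList I l * ofList I m := by
  rw [ofList, FreeMonoid.ofList_append]
  exact map_mul _ _ _

lemma ofList_cons (a : S) (l : List S) : ofList I (a :: l) = piece I a * ofList I l := by
  rw [ofList, FreeMonoid.ofList_cons]
  exact map_mul _ _ _

lemma ofList_singleton (a : S) : ofList I [a] = piece I a := rfl

lemma ofList_eq_prod (l : List S) : ofList I l = (l.map (piece I)).prod := by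
  induction l with
  | nil => exact ofList_nil
  | cons a l ih => rw [ofList_cons, ih, List.map_cons, List.prod_cons]

lemma exists_eq_ofList (x : Heap I) : ∃ l, x = ofList I l := by
  obtain ⟨w, rfl⟩ := Con.mk'_surjective (c := HeapCon I) x
  exact ⟨w.toList, congrArg _ (FreeMonoid.ofList_toList w).symm⟩

lemma piece_mul_piece_comm {a b : S} (h : I a b) :
    piece I a * piece I b = piece I b * piece I a :=
  (Con.eq _).mpr (ConGen.Rel.of _ _ ⟨a, b, h, rfl, rfl⟩)

lemma ofList_append_cons {p q : List S} {a : S} (h : ∀ d ∈ p, I d a) :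
    ofList I (p ++ a :: q) = piece I a * ofList I (p ++ q) := by
  induction p with
  | nil => rfl
  | cons d p ih =>
    simp only [List.cons_append, ofList_cons]
    rw [ih fun e he => h e (.tail _ he), ← mul_assoc,
      piece_mul_piece_comm (h d (.head _)), mul_assoc]

lemma addExt_mul {A : Type} [AddCommMonoid A] (φ : S → A) (x y : Heap I) :
    addExt φ (x * y) = addExt φ x + addExt φ y :=
  congrArg Multiplicative.toAdd (map_mul _ x y)

lemma addExt_one {A : Type} [AddCommMonoid A] (φ : S → A) : addExt φ (1 : Heap I) = 0 :=
  congrArg Multiplicative.toAdd (map_one _)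

lemma addExt_piece {A : Type} [AddCommMonoid A] (φ : S → A) (a : S) :
    addExt φ (piece I a) = φ a := by
  unfold addExt piece
  erw [Con.lift_coe]
  simp

lemma addExt_ofList {A : Type} [AddCommMonoid A] (φ : S → A) (l : List S) :
    addExt φ (ofList I l) = (l.map φ).sum := by
  induction l with
  | nil => rw [ofList_nil, addExt_one, List.map_nil, List.sum_nil]
  | cons a l ih => rw [ofList_cons, addExt_mul, addExt_piece, ih, List.map_cons, List.sum_cons]

lemma len_ofList (l : List S) : len (ofList I l) = l.length := by
  simp [len, addExt_ofList]

lemma len_mul (x y : Heap I) : len (x * y) = len x + len y := addExt_mul _ _ _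

lemma len_one : len (1 : Heap I) = 0 := addExt_one _

lemma eq_one_of_len_eq_zero {x : Heap I} (h : len x = 0) : x = 1 := by
  obtain ⟨l, rfl⟩ := exists_eq_ofList x
  rw [len_ofList, List.length_eq_zero_iff] at h
  rw [h, ofList_nil]

lemma eq_of_dvd_of_len_le {x y : Heap I} (h : x ∣ y) (hl : len y ≤ len x) : x = y := by
  obtain ⟨z, rfl⟩ := h
  rw [len_mul] at hl
  rw [eq_one_of_len_eq_zero (by omega : len z = 0), mul_one]

lemma exists_eventually_eq_of_dvd_of_len_le {u : ℕ → Heap I}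
    (hu : ∀ m n, m ≤ n → u m ∣ u n) {B : ℕ} (hB : ∀ n, len (u n) ≤ B) :
    ∃ y, ∀ᶠ n in atTop, u n = y := by
  obtain ⟨N, hN⟩ : ∃ N, ∀ n, len (u n) ≤ len (u N) := by
    have hbdd : BddAbove (range fun n => len (u n)) := ⟨B, forall_mem_range.mpr hB⟩
    obtain ⟨N, hN⟩ := Nat.sSup_mem (range_nonempty _) hbdd
    exact ⟨N, fun n => (le_csSup hbdd ⟨n, rfl⟩).trans_eq hN.symm⟩
  exact ⟨u N, eventually_atTop.mpr ⟨N, fun n hn => (eq_of_dvd_of_len_le (hu N n hn) (hN n)).symm⟩⟩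

section Projections

variable [DecidableEq S]

def proj (a b : S) (l : List S) : List S := l.filter fun c => c = a ∨ c = b

lemma mem_proj {a b c : S} {l : List S} : c ∈ proj a b l ↔ c ∈ l ∧ (c = a ∨ c = b) := by
  simp [proj]

lemma proj_append (a b : S) (l m : List S) : proj a b (l ++ m) = proj a b l ++ proj a b m :=
  List.filter_append _ _

lemma proj_ne_nil {a b c : S} {l : List S} (hc : c ∈ l) (hcab : c = a ∨ c = b) :
    proj a b l ≠ [] :=
  List.ne_nil_of_mem (mem_proj.mpr ⟨hc, hcab⟩)

lemma mem_of_head?_proj_append_eq {a b c : S} {l m : List S} (hc : c ∈ l)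
    (hcab : c = a ∨ c = b) {d : S} (h : (proj a b (l ++ m)).head? = some d) : d ∈ l := by
  rw [proj_append, List.head?_append_of_ne_nil _ (proj_ne_nil hc hcab)] at h
  exact (mem_proj.mp (List.mem_of_mem_head? h)).1

lemma proj_eq_of_ofList_eq [Std.Symm I] {a b : S} (hab : ¬ I a b) {l m : List S}
    (h : ofList I l = ofList I m) : proj a b l = proj a b m := by
  let projCon : Con (FreeMonoid S) :=
    { r := fun w v => proj a b w.toList = proj a b v.toList
      iseqv := ⟨fun _ => rfl, Eq.symm, Eq.trans⟩
      mul' := fun h₁ h₂ => by simp only [FreeMonoid.toList_mul, proj_append, h₁, h₂] }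
  have hle : HeapCon I ≤ projCon := by
    refine Con.conGen_le.mpr ?_
    rintro _ _ ⟨c, d, hcd, rfl, rfl⟩
    show proj a b [c, d] = proj a b [d, c]
    by_cases hc : c = a ∨ c = b <;> by_cases hd : d = a ∨ d = b <;>
      simp only [proj, List.filter_cons, hc, hd, decide_true, decide_false, List.filter_nil,
        if_true, if_false, Bool.false_eq_true, List.cons.injEq, and_true]
    rcases hc with rfl | rfl <;> rcases hd with rfl | rfl
    exacts [⟨rfl, rfl⟩, absurd hcd hab, absurd (symm_of I hcd) hab, ⟨rfl, rfl⟩]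
  exact hle ((Con.eq _).mp h)

/-- Induction on `l`: its first letter `c` can only be preceded in `m` by pieces independent of
`c`, which can be commuted past it. -/
lemma ofList_eq_ofList_of_proj_eq [Std.Symm I] [Std.Irrefl I] {l m : List S}
    (h : ∀ a b, ¬ I a b → proj a b l = proj a b m) : ofList I l = ofList I m := by
  induction l generalizing m with
  | nil =>
    suffices m = [] by rw [this]
    refine List.eq_nil_iff_forall_not_mem.mpr fun c hc => ?_
    have hc' : c ∈ proj c c m := mem_proj.mpr ⟨hc, Or.inl rfl⟩
    rw [← h c c (irrefl_of I c)] at hc'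
    simp [proj] at hc'
  | cons c l ih =>
    have hcm : c ∈ m :=
      (mem_proj.mp (h c c (irrefl_of I c) ▸ mem_proj.mpr ⟨.head _, Or.inl rfl⟩)).1
    obtain ⟨p, q, rfl, hcp⟩ := List.eq_append_cons_of_mem hcm
    have hindep : ∀ d ∈ p, I d c := fun d hd => by_contra fun hdc => hcp <|
      mem_of_head?_proj_append_eq hd (Or.inl rfl)
        ((congrArg List.head? (h d c hdc)).symm.trans (by simp [proj]))
    have hswap := ofList_append_cons (q := q) hindep
    rw [hswap, ofList_cons]
    refine congrArg _ (ih fun a b hab => ?_)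
    have := (h a b hab).trans (proj_eq_of_ofList_eq hab (hswap.trans (ofList_cons _ _).symm))
    by_cases hc : c = a ∨ c = b <;> simpa [proj, List.filter_cons, hc] using this

end Projections

end Heap

open Heap

instance [Std.Symm I] [Std.Irrefl I] : IsLeftCancelMul (Heap I) := by
  classical
  refine ⟨fun x y z h => ?_⟩
  obtain ⟨l, rfl⟩ := exists_eq_ofList x
  obtain ⟨m, rfl⟩ := exists_eq_ofList y
  obtain ⟨n, rfl⟩ := exists_eq_ofList z
  replace h : ofList I (l ++ m) = ofList I (l ++ n) := by simpa only [ofList_append] using h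
  refine ofList_eq_ofList_of_proj_eq fun a b hab => ?_
  simpa [proj_append] using proj_eq_of_ofList_eq hab h

namespace Heap

lemma dvd_of_mul_dvd_mul_left [Std.Symm I] [Std.Irrefl I] {x y z : Heap I}
    (h : x * y ∣ x * z) : y ∣ z := by
  obtain ⟨w, hw⟩ := h
  exact ⟨w, mul_left_cancel (hw.trans (mul_assoc _ _ _))⟩

section MinimalPieces

variable [DecidableEq S]

lemma occ_mul (a : S) (x y : Heap I) : occ a (x * y) = occ a x + occ a y := addExt_mul _ _ _

lemma occ_ofList (c : S) (l : List S) : occ c (ofList I l) = l.count c := by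
  rw [occ, addExt_ofList]
  induction l with
  | nil => rfl
  | cons b l ih => by_cases hb : b = c <;> simp [ih, hb, add_comm]

lemma occ_pos_ofList_iff {c : S} {l : List S} : 0 < occ c (ofList I l) ↔ c ∈ l := by
  rw [occ_ofList, List.count_pos_iff]

lemma occ_pos_of_piece_dvd {a : S} {x : Heap I} (h : piece I a ∣ x) : 0 < occ a x := by
  obtain ⟨z, rfl⟩ := h
  rw [occ_mul, occ, addExt_piece, if_pos rfl]
  omega

lemma mul_piece_comm {a : S} {x : Heap I} (h : ∀ c, 0 < occ c x → I c a) :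
    x * piece I a = piece I a * x := by
  obtain ⟨l, rfl⟩ := exists_eq_ofList x
  have := ofList_append_cons (I := I) (q := []) fun c hc => h c (occ_pos_ofList_iff.mpr hc)
  rwa [List.append_nil, ofList_append, ofList_singleton] at this

variable [Std.Symm I] [Std.Irrefl I]

lemma piece_dvd_ofList_iff {a : S} {l : List S} :
    piece I a ∣ ofList I l ↔ ∀ b, ¬ I a b → (proj a b l).head? = some a := by
  constructor
  · rintro ⟨z, hz⟩ b hab
    obtain ⟨m, rfl⟩ := exists_eq_ofList z
    rw [← ofList_cons] at hz
    rw [proj_eq_of_ofList_eq hab hz]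
    simp [proj]
  · intro h
    have hal : a ∈ l := (mem_proj.mp (List.mem_of_mem_head? (h a (irrefl_of I a)))).1
    obtain ⟨p, q, rfl, hap⟩ := List.eq_append_cons_of_mem hal
    have hindep : ∀ d ∈ p, I d a := fun d hd => by_contra fun hda => hap <|
      mem_of_head?_proj_append_eq hd (Or.inr rfl) (h d fun had => hda (symm_of I had))
    rw [ofList_append_cons hindep]
    exact dvd_mul_right _ _

lemma piece_dvd_mul_iff {a : S} {x y : Heap I} :
    piece I a ∣ x * y ↔ piece I a ∣ x ∨ ((∀ c, 0 < occ c x → I c a) ∧ piece I a ∣ y) := by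
  refine ⟨fun h => ?_, ?_⟩
  · obtain ⟨l, rfl⟩ := exists_eq_ofList x
    obtain ⟨m, rfl⟩ := exists_eq_ofList y
    rw [← ofList_append, piece_dvd_ofList_iff] at h
    simp only [piece_dvd_ofList_iff, occ_pos_ofList_iff]
    by_cases hal : a ∈ l
    · refine .inl fun b hab => ?_
      rw [← h b hab, proj_append, List.head?_append_of_ne_nil _ (proj_ne_nil hal (Or.inl rfl))]
    have hindep : ∀ c ∈ l, I c a := fun c hc => by_contra fun hca => hal <|
      mem_of_head?_proj_append_eq hc (Or.inr rfl) (h c fun hac => hca (symm_of I hac))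
    refine .inr ⟨hindep, fun b hab => ?_⟩
    have hnil : proj a b l = [] := List.eq_nil_iff_forall_not_mem.mpr fun c hc => by
      obtain ⟨hcl, rfl | rfl⟩ := mem_proj.mp hc
      exacts [hal hcl, hab (symm_of I (hindep _ hcl))]
    rw [← h b hab, proj_append, hnil, List.nil_append]
  · rintro (h | ⟨hindep, z, rfl⟩)
    · exact h.mul_right y
    · exact ⟨x * z, by rw [← mul_assoc, mul_piece_comm hindep, mul_assoc]⟩

lemma piece_dvd_piece_iff {a b : S} : piece I a ∣ piece I b ↔ a = b := by
  refine ⟨fun h => by_contra fun hab => ?_, fun h => h ▸ dvd_rfl⟩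
  have := (piece_dvd_ofList_iff (l := [b])).mp h a (irrefl_of I a)
  simp only [proj, List.filter_cons, List.filter_nil] at this
  split_ifs at this
  · exact hab (Option.some_injective _ this).symm
  · simp at this

end MinimalPieces

variable [Std.Symm I] [Std.Irrefl I]

lemma ofList_dvd_of_nodup {l : List S} (hl : l.Nodup) {x : Heap I}
    (h : ∀ a ∈ l, piece I a ∣ x) : ofList I l ∣ x := by
  classical
  induction l generalizing x with
  | nil => exact ofList_nil ▸ one_dvd x
  | cons a l ih =>
    obtain ⟨x', rfl⟩ := h a (.head _)
    rw [ofList_cons]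
    refine mul_dvd_mul_left _ (ih (List.nodup_cons.mp hl).2 fun b hb => ?_)
    rcases piece_dvd_mul_iff.mp (h b (.tail _ hb)) with hba | ⟨-, hbx⟩
    · exact absurd (piece_dvd_piece_iff.mp hba ▸ hb) (List.nodup_cons.mp hl).1
    · exact hbx

lemma exists_dvd_piece_mul_iff {a : S} {v t : Heap I} (h : v ∣ piece I a * t) :
    ∃ v', ∀ s, v ∣ piece I a * s ↔ v' ∣ s := by
  classical
  by_cases ha : piece I a ∣ v
  · obtain ⟨v', rfl⟩ := ha
    exact ⟨v', fun s => ⟨dvd_of_mul_dvd_mul_left, mul_dvd_mul_left _⟩⟩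
  -- `a` is not minimal in `v`, so it commutes with all of `v` and is minimal in the cofactor
  have hcofactor : ∀ {s r : Heap I}, piece I a * s = v * r →
      (∀ c, 0 < occ c v → I c a) ∧ piece I a ∣ r := fun {s r} hr =>
    (piece_dvd_mul_iff.mp (hr ▸ dvd_mul_right _ _)).resolve_left ha
  obtain ⟨r, hr⟩ := h
  have hcomm := mul_piece_comm (hcofactor hr).1
  refine ⟨v, fun s => ⟨fun ⟨r', hr'⟩ => ?_, fun ⟨r', hr'⟩ => ⟨piece I a * r', ?_⟩⟩⟩
  · obtain ⟨r'', rfl⟩ := (hcofactor hr').2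
    exact ⟨r'', mul_left_cancel (hr'.trans (by rw [← mul_assoc, hcomm, mul_assoc]))⟩
  · rw [hr', ← mul_assoc, ← mul_assoc, hcomm]

lemma exists_lcm {u v t : Heap I} (hu : u ∣ t) (hv : v ∣ t) :
    ∃ w, u ∣ w ∧ v ∣ w ∧ ∀ t', u ∣ t' → v ∣ t' → w ∣ t' := by
  obtain ⟨l, rfl⟩ := exists_eq_ofList u
  induction l generalizing v t with
  | nil => exact ⟨v, ofList_nil ▸ one_dvd v, dvd_rfl, fun _ _ h => h⟩
  | cons a l ih =>
    rw [ofList_cons] at hu ⊢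
    obtain ⟨r, rfl⟩ := hu
    rw [mul_assoc] at hv
    obtain ⟨v', hv'⟩ := exists_dvd_piece_mul_iff hv
    obtain ⟨w, hlw, hvw, hw⟩ := ih ((hv' _).mp hv) (dvd_mul_right _ r)
    refine ⟨piece I a * w, mul_dvd_mul_left _ hlw, (hv' w).mpr hvw, fun t' hut' hvt' => ?_⟩
    obtain ⟨t'', rfl⟩ := (dvd_mul_right _ _).trans hut'
    exact mul_dvd_mul_left _ (hw _ (dvd_of_mul_dvd_mul_left hut') ((hv' _).mp hvt'))

end Heap

namespace Cl

lemma heap_eq_ofList (γ : Cl I) : γ.heap = ofList I γ.1.toList := by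
  classical
  rw [ofList_eq_prod, ← Finset.noncommProd_toFinset γ.1.toList _ _ (Finset.nodup_toList _)]
  · simp only [Finset.toList_toFinset]
    rfl
  · intro a ha b hb hab
    simp only [Finset.toList_toFinset, Finset.mem_coe] at ha hb
    exact piece_mul_piece_comm (γ.2 a ha b hb hab)

lemma heap_emptyCl : (emptyCl I).heap = 1 := rfl

lemma len_heap (γ : Cl I) : len γ.heap = γ.1.card := by
  rw [heap_eq_ofList, len_ofList, Finset.length_toList]

lemma piece_dvd_heap_iff {γ : Cl I} {a : S} : piece I a ∣ γ.heap ↔ a ∈ γ.1 := by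
  classical
  refine ⟨fun h => ?_, fun ha => ?_⟩
  · have := occ_pos_of_piece_dvd h
    rwa [heap_eq_ofList, occ_pos_ofList_iff, Finset.mem_toList] at this
  · obtain ⟨p, q, hpq, hap⟩ := List.eq_append_cons_of_mem (Finset.mem_toList.mpr ha)
    have hindep : ∀ d ∈ p, I d a := fun d hd =>
      γ.2 d (Finset.mem_toList.mp (hpq ▸ List.mem_append_left _ hd)) a ha
        fun hda => hap (hda ▸ hd)
    rw [heap_eq_ofList, hpq, ofList_append_cons hindep]
    exact dvd_mul_right _ _

lemma heap_injective : Injective (Cl.heap (I := I)) := fun γ δ h =>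
  Subtype.ext <| Finset.ext fun a => by rw [← piece_dvd_heap_iff, ← piece_dvd_heap_iff, h]

lemma heap_dvd_of_forall_piece_dvd [Std.Symm I] [Std.Irrefl I] {γ : Cl I} {x : Heap I}
    (h : ∀ a ∈ γ.1, piece I a ∣ x) : γ.heap ∣ x := by
  rw [heap_eq_ofList]
  exact ofList_dvd_of_nodup (Finset.nodup_toList _) fun a ha => h a (Finset.mem_toList.mp ha)

lemma exists_heap_eq_mul_of_subset [DecidableEq S] {γ δ : Cl I} (h : δ.1 ⊆ γ.1) :
    ∃ ε : Cl I, ε.1 = γ.1 \ δ.1 ∧ γ.heap = δ.heap * ε.heap := by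
  refine ⟨⟨γ.1 \ δ.1, fun a ha b hb =>
    γ.2 a (Finset.sdiff_subset ha) b (Finset.sdiff_subset hb)⟩, rfl, ?_⟩
  have hcomm : ((δ.1 ∪ (γ.1 \ δ.1) : Finset S) : Set S).Pairwise (Commute on piece I) := by
    intro a ha b hb hab
    rw [Finset.union_sdiff_of_subset h] at ha hb
    exact piece_mul_piece_comm (γ.2 a ha b hb hab)
  have hγ : γ = ⟨δ.1 ∪ (γ.1 \ δ.1), by rw [Finset.union_sdiff_of_subset h]; exact γ.2⟩ :=
    Subtype.ext (Finset.union_sdiff_of_subset h).symm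
  conv_lhs => rw [hγ]
  exact Finset.noncommProd_union_of_disjoint Finset.disjoint_sdiff _ hcomm

end Cl

lemma move_emptyCl {γ : Cl I} (h : Move (emptyCl I) γ) : γ = emptyCl I :=
  Subtype.ext <| Finset.eq_empty_of_forall_notMem fun b hb => by
    obtain ⟨a, ha, -⟩ := h b hb
    exact Finset.notMem_empty a ha

section PartialProducts

lemma ppSeq_zero (c : ℕ → Cl I) : ppSeq c 0 = 1 := rfl

lemma ppSeq_succ (c : ℕ → Cl I) (n : ℕ) : ppSeq c (n + 1) = ppSeq c n * (c n).heap := by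
  rw [ppSeq, List.range_succ, List.map_append, List.prod_append]
  simp [ppSeq]

lemma ppSeq_succ' (c : ℕ → Cl I) (n : ℕ) :
    ppSeq c (n + 1) = (c 0).heap * ppSeq (fun i => c (i + 1)) n := by
  induction n with
  | zero => rw [ppSeq_succ, ppSeq_zero, ppSeq_zero, one_mul, mul_one]
  | succ n ih => rw [ppSeq_succ, ih, ppSeq_succ (fun i => c (i + 1)), mul_assoc]

lemma ppSeq_dvd_ppSeq (c : ℕ → Cl I) {m n : ℕ} (h : m ≤ n) : ppSeq c m ∣ ppSeq c n := by
  induction n, h using Nat.le_induction with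
  | base => exact dvd_rfl
  | succ n _ ih => exact ih.trans (ppSeq_succ c n ▸ dvd_mul_right _ _)

lemma ppSeq_congr {c d : ℕ → Cl I} {n : ℕ} (h : ∀ j < n, c j = d j) :
    ppSeq c n = ppSeq d n := by
  induction n with
  | zero => rfl
  | succ n ih => rw [ppSeq_succ, ppSeq_succ, ih fun j hj => h j (by omega), h n (by omega)]

lemma ppSeq_eq_of_forall_eq_emptyCl {c : ℕ → Cl I} {j : ℕ}
    (h : ∀ i, j ≤ i → c i = emptyCl I) {m : ℕ} (hm : j ≤ m) : ppSeq c m = ppSeq c j := by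
  induction m, hm using Nat.le_induction with
  | base => rfl
  | succ m hjm ih => rw [ppSeq_succ, h m hjm, Cl.heap_emptyCl, mul_one, ih]

lemma ppSeq_truncate (c : ℕ → Cl I) (n m : ℕ) :
    ppSeq (fun i => if i < n then c i else emptyCl I) m = ppSeq c (min m n) := by
  induction m with
  | zero => rfl
  | succ m ih =>
    rw [ppSeq_succ, ih]
    split_ifs with h
    · rw [Nat.min_eq_left h.le, Nat.min_eq_left h, ppSeq_succ]
    · rw [Cl.heap_emptyCl, mul_one, Nat.min_eq_right (not_lt.mp h), Nat.min_eq_right (by omega)]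

lemma len_ppSeq_le [Fintype S] (c : ℕ → Cl I) (n : ℕ) :
    len (ppSeq c n) ≤ n * Fintype.card S := by
  induction n with
  | zero => rw [ppSeq_zero, len_one]; exact Nat.zero_le _
  | succ n ih =>
    rw [ppSeq_succ, len_mul, Cl.len_heap, Nat.succ_mul]
    exact Nat.add_le_add ih (Finset.card_le_univ _)

lemma le_len_ppSeq {c : ℕ → Cl I} (hc : ∀ i, (c i).1.Nonempty) (n : ℕ) :
    n ≤ len (ppSeq c n) := by
  induction n with
  | zero => exact Nat.zero_le _
  | succ n ih =>
    rw [ppSeq_succ, len_mul, Cl.len_heap]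
    exact Nat.add_le_add ih (Finset.card_pos.mpr (hc n))

lemma piece_dvd_ppSeq_succ_iff [Std.Symm I] [Std.Irrefl I] {c : ℕ → Cl I}
    (hc : ∀ n, Move (c n) (c (n + 1))) {a : S} (n : ℕ) :
    piece I a ∣ ppSeq c (n + 1) ↔ a ∈ (c 0).1 := by
  classical
  induction n with
  | zero => rw [ppSeq_succ, ppSeq_zero, one_mul, Cl.piece_dvd_heap_iff]
  | succ n ih =>
    rw [ppSeq_succ _ (n + 1), piece_dvd_mul_iff, ih, or_iff_left_iff_imp]
    rintro ⟨hindep, ha⟩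
    obtain ⟨b, hb, hba⟩ := hc n a (Cl.piece_dvd_heap_iff.mp ha)
    refine absurd (hindep b ?_) hba
    rw [ppSeq_succ, occ_mul]
    exact Nat.add_pos_right _ (occ_pos_of_piece_dvd (Cl.piece_dvd_heap_iff.mpr hb))

end PartialProducts

section CartierFoata

variable (hCF : ∀ x : Heap I, ∃! c : ℕ → Cl I, CFprop I c x)
include hCF

lemma cf_spec (x : Heap I) : CFprop I (cf I x) x := by
  rw [cf, dif_pos (hCF x).exists]
  exact (hCF x).exists.choose_spec

lemma cf_eq {c : ℕ → Cl I} {x : Heap I} (h : CFprop I c x) : cf I x = c :=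
  (hCF x).unique (cf_spec hCF x) h

lemma cf_move (x : Heap I) (n : ℕ) : Move (cf I x n) (cf I x (n + 1)) := (cf_spec hCF x).1 n

lemma eventually_ppSeq_cf_eq (x : Heap I) : ∀ᶠ n in atTop, ppSeq (cf I x) n = x := by
  obtain ⟨-, N, hN⟩ := cf_spec hCF x
  exact eventually_atTop.mpr ⟨N, fun n hn => (hN n hn).1⟩

lemma ppSeq_cf_dvd (x : Heap I) (k : ℕ) : ppSeq (cf I x) k ∣ x := by
  obtain ⟨n, hn, hkn⟩ := ((eventually_ppSeq_cf_eq hCF x).and (eventually_ge_atTop k)).exists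
  exact (ppSeq_dvd_ppSeq _ hkn).trans (dvd_of_eq hn)

lemma cf_eq_emptyCl_of_le {x : Heap I} {j m : ℕ} (h : cf I x j = emptyCl I) (hjm : j ≤ m) :
    cf I x m = emptyCl I := by
  induction m, hjm using Nat.le_induction with
  | base => exact h
  | succ m _ ih => exact move_emptyCl (ih ▸ cf_move hCF x m)

lemma ppSeq_cf_eq_of_eq_emptyCl {x : Heap I} {j : ℕ} (h : cf I x j = emptyCl I) :
    ppSeq (cf I x) j = x := by
  obtain ⟨n, hn, hjn⟩ := ((eventually_ppSeq_cf_eq hCF x).and (eventually_ge_atTop j)).exists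
  rw [← ppSeq_eq_of_forall_eq_emptyCl (fun i hi => cf_eq_emptyCl_of_le hCF h hi) hjn, hn]

lemma cf_ppSeq (ξ : Bnd I) (n : ℕ) :
    cf I (ppSeq ξ.1 n) = fun i => if i < n then ξ.1 i else emptyCl I := by
  refine cf_eq hCF ⟨fun i => ?_, n, fun m hm => ⟨?_, if_neg (by omega)⟩⟩
  · by_cases h : i + 1 < n
    · simpa only [if_pos h, if_pos (by omega : i < n)] using ξ.2.2 i
    · show Move _ (if i + 1 < n then _ else _)
      rw [if_neg h]
      exact fun b hb => absurd hb (Finset.notMem_empty b)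
  · rw [ppSeq_truncate, Nat.min_eq_right hm]

variable [Std.Symm I] [Std.Irrefl I]

lemma mem_cf_zero_iff {x : Heap I} {a : S} : a ∈ (cf I x 0).1 ↔ piece I a ∣ x := by
  obtain ⟨N, hN⟩ := eventually_atTop.mp (eventually_ppSeq_cf_eq hCF x)
  conv_rhs => rw [← hN (N + 1) (Nat.le_succ N)]
  rw [piece_dvd_ppSeq_succ_iff (cf_move hCF x)]

lemma exists_cf_shift (x : Heap I) :
    ∃ x', x = (cf I x 0).heap * x' ∧ cf I x' = fun n => cf I x (n + 1) := by
  obtain ⟨hmove, N, hN⟩ := cf_spec hCF x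
  have hx : ∀ n, N ≤ n → (cf I x 0).heap * ppSeq (fun i => cf I x (i + 1)) n = x :=
    fun n hn => by rw [← ppSeq_succ', (hN (n + 1) (by omega)).1]
  refine ⟨_, (hx N le_rfl).symm, cf_eq hCF ⟨fun n => hmove (n + 1), N, fun n hn => ?_⟩⟩
  exact ⟨mul_left_cancel ((hx n hn).trans (hx N le_rfl).symm), (hN (n + 1) (by omega)).2⟩

/-- `hk` is `dvd_ppSeq_cf` at rank `k`: the two lemmas are proved by a joint induction. -/
lemma ppSeq_cf_mul_dvd {k : ℕ}
    (hk : ∀ (c : ℕ → Cl I) (t : Heap I), ppSeq c k ∣ t → ppSeq c k ∣ ppSeq (cf I t) k)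
    (ε : Cl I) (s : Heap I) : ppSeq (cf I (ε.heap * s)) k ∣ ε.heap * ppSeq (cf I s) k := by
  classical
  cases k with
  | zero => exact one_dvd _
  | succ k =>
  set δ := cf I (ε.heap * s) 0
  have hεδ : ε.1 ⊆ δ.1 := fun a ha =>
    (mem_cf_zero_iff hCF).mpr ((Cl.piece_dvd_heap_iff.mpr ha).mul_right s)
  obtain ⟨φ, hφ, hδ⟩ := Cl.exists_heap_eq_mul_of_subset hεδ
  have hφs : φ.heap ∣ s := by
    refine Cl.heap_dvd_of_forall_piece_dvd fun a ha => ?_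
    rw [hφ, Finset.mem_sdiff] at ha
    rcases piece_dvd_mul_iff.mp ((mem_cf_zero_iff hCF).mp ha.1) with haε | ⟨-, has⟩
    exacts [absurd (Cl.piece_dvd_heap_iff.mp haε) ha.2, has]
  obtain ⟨s', rfl⟩ := hφs
  obtain ⟨w', hw', hcf⟩ := exists_cf_shift hCF (ε.heap * (φ.heap * s'))
  have hw's' : w' = s' := mul_left_cancel (hw'.symm.trans (by rw [hδ, mul_assoc]))
  rw [ppSeq_succ', ← hcf, hw's', hδ, mul_assoc]
  have key := hk (fun | 0 => φ | i + 1 => cf I s' i) (φ.heap * s')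
    (by rw [ppSeq_succ']; exact mul_dvd_mul_left _ (ppSeq_cf_dvd hCF s' k))
  rw [ppSeq_succ'] at key
  exact mul_dvd_mul_left _ key

lemma dvd_ppSeq_cf (k : ℕ) :
    ∀ (c : ℕ → Cl I) (t : Heap I), ppSeq c k ∣ t → ppSeq c k ∣ ppSeq (cf I t) k := by
  classical
  induction k with
  | zero => exact fun _ _ _ => one_dvd _
  | succ k ih =>
  intro c t h
  have hc : (c 0).1 ⊆ (cf I t 0).1 := fun a ha => (mem_cf_zero_iff hCF).mpr <|
    (Cl.piece_dvd_heap_iff.mpr ha).trans ((ppSeq_succ' c k ▸ dvd_mul_right _ _).trans h)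
  obtain ⟨ε, -, hδ⟩ := Cl.exists_heap_eq_mul_of_subset hc
  obtain ⟨t₁, ht, hcf⟩ := exists_cf_shift hCF t
  rw [ppSeq_succ', ht, hδ, mul_assoc] at h
  rw [ppSeq_succ', ppSeq_succ', ← hcf, hδ, mul_assoc]
  exact mul_dvd_mul_left _
    ((ih _ _ (dvd_of_mul_dvd_mul_left h)).trans (ppSeq_cf_mul_dvd hCF ih ε t₁))

lemma ppSeq_cf_dvd_ppSeq_cf {u t : Heap I} (h : u ∣ t) (k : ℕ) :
    ppSeq (cf I u) k ∣ ppSeq (cf I t) k :=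
  dvd_ppSeq_cf hCF k _ _ ((ppSeq_cf_dvd hCF u k).trans h)

lemma mem_cyl_iff {y : Heap I} {ξ : Bnd I} : ξ ∈ cyl y ↔ ∃ n, y ∣ ppSeq ξ.1 n := by
  refine ⟨fun h => ?_, fun ⟨n, hn⟩ m => ?_⟩
  · obtain ⟨N, hN⟩ := eventually_atTop.mp (eventually_ppSeq_cf_eq hCF y)
    exact ⟨N, hN N le_rfl ▸ h N⟩
  · have := ppSeq_cf_dvd_ppSeq_cf hCF (hn.trans (ppSeq_dvd_ppSeq ξ.1 (le_max_left n m))) m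
    rwa [cf_ppSeq hCF, ppSeq_truncate, Nat.min_eq_left (le_max_right n m)] at this

lemma cyl_subset_cyl {x y : Heap I} (h : x ∣ y) : cyl y ⊆ cyl x := fun _ hξ => by
  obtain ⟨n, hn⟩ := (mem_cyl_iff hCF).mp hξ
  exact (mem_cyl_iff hCF).mpr ⟨n, h.trans hn⟩

lemma mem_cyl_one (ξ : Bnd I) : ξ ∈ cyl (1 : Heap I) :=
  (mem_cyl_iff hCF).mpr ⟨0, one_dvd _⟩

lemma exists_inter_cyl_eq_cyl {z₁ z₂ : Heap I} (h : (cyl z₁ ∩ cyl z₂).Nonempty) :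
    ∃ w, cyl z₁ ∩ cyl z₂ = cyl w := by
  obtain ⟨ξ, h₁, h₂⟩ := h
  obtain ⟨n₁, hn₁⟩ := (mem_cyl_iff hCF).mp h₁
  obtain ⟨n₂, hn₂⟩ := (mem_cyl_iff hCF).mp h₂
  obtain ⟨w, hw₁, hw₂, hw⟩ := exists_lcm (hn₁.trans (ppSeq_dvd_ppSeq _ (le_max_left n₁ n₂)))
    (hn₂.trans (ppSeq_dvd_ppSeq _ (le_max_right n₁ n₂)))
  refine ⟨w, Subset.antisymm (fun η ⟨hη₁, hη₂⟩ => ?_)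
    fun η hη => ⟨cyl_subset_cyl hCF hw₁ hη, cyl_subset_cyl hCF hw₂ hη⟩⟩
  obtain ⟨m₁, hm₁⟩ := (mem_cyl_iff hCF).mp hη₁
  obtain ⟨m₂, hm₂⟩ := (mem_cyl_iff hCF).mp hη₂
  exact (mem_cyl_iff hCF).mpr ⟨max m₁ m₂, hw _ (hm₁.trans (ppSeq_dvd_ppSeq _ (le_max_left _ _)))
    (hm₂.trans (ppSeq_dvd_ppSeq _ (le_max_right _ _)))⟩

lemma isPiSystem_cyl : IsPiSystem {A : Set (Bnd I) | ∃ x, A = cyl x} := by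
  rintro _ ⟨z₁, rfl⟩ _ ⟨z₂, rfl⟩ h
  obtain ⟨w, hw⟩ := exists_inter_cyl_eq_cyl hCF h
  exact ⟨w, hw⟩

end CartierFoata

section Concatenation

variable [Fintype S] [Std.Symm I] [Std.Irrefl I]
  (hCF : ∀ x : Heap I, ∃! c : ℕ → Cl I, CFprop I c x)
include hCF

lemma exists_eventually_cf_eq {u : ℕ → Heap I} (hu : ∀ m n, m ≤ n → u m ∣ u n) (k : ℕ) :
    ∃ γ, ∀ᶠ n in atTop, cf I (u n) k = γ := by
  have hmono : ∀ k m n, m ≤ n → ppSeq (cf I (u m)) k ∣ ppSeq (cf I (u n)) k :=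
    fun k m n h => ppSeq_cf_dvd_ppSeq_cf hCF (hu m n h) k
  obtain ⟨y, hy⟩ := exists_eventually_eq_of_dvd_of_len_le (hmono k) fun _ => len_ppSeq_le _ k
  obtain ⟨y', hy'⟩ :=
    exists_eventually_eq_of_dvd_of_len_le (hmono (k + 1)) fun _ => len_ppSeq_le _ (k + 1)
  obtain ⟨n₀, hn₀⟩ := (hy.and hy').exists
  refine ⟨cf I (u n₀) k, (hy.and hy').mono fun n hn =>
    Cl.heap_injective (mul_left_cancel (a := y) ?_)⟩
  calc y * (cf I (u n) k).heap = y' := by rw [← hn.1, ← ppSeq_succ, hn.2]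
    _ = y * (cf I (u n₀) k).heap := by rw [← hn₀.1, ← ppSeq_succ, hn₀.2]

/-- The cliques of the limit are the eventual Cartier–Foata cliques of the `u n`. They are nonempty
because a heap whose `j`-th clique is empty has length at most `j * |Σ|`. -/
lemma exists_bnd_eventually_ppSeq_eq {u : ℕ → Heap I} (hu : ∀ m n, m ≤ n → u m ∣ u n)
    (hlen : ∀ n, n ≤ len (u n)) :
    ∃ E : Bnd I, ∀ k, ∀ᶠ n in atTop, ppSeq (cf I (u n)) k = ppSeq E.1 k := by
  choose e he using exists_eventually_cf_eq hCF hu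
  have hne : ∀ j, (e j).1.Nonempty := by
    refine fun j => Finset.nonempty_iff_ne_empty.mpr fun hj => ?_
    obtain ⟨n, hn, hjn⟩ := ((he j).and (eventually_ge_atTop (j * Fintype.card S + 1))).exists
    have hlen' := (hlen n).trans_eq
      (congrArg len (ppSeq_cf_eq_of_eq_emptyCl hCF (hn.trans (Subtype.ext hj)))).symm
    have := len_ppSeq_le (cf I (u n)) j
    omega
  have hmove : ∀ j, Move (e j) (e (j + 1)) := fun j => by
    obtain ⟨n, h₁, h₂⟩ := ((he j).and (he (j + 1))).exists
    exact h₁ ▸ h₂ ▸ cf_move hCF (u n) j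
  refine ⟨⟨e, hne, hmove⟩, fun k => ?_⟩
  filter_upwards [(eventually_all_finset (Finset.range k)).mpr fun j _ => he j] with n hn
  exact ppSeq_congr fun j hj => hn j (Finset.mem_range.mpr hj)

variable (hconc : ∀ (x : Heap I) (ξ : Bnd I), ∃ ζ : Bnd I, IsConc x ξ (Sum.inr ζ))
include hconc

/-- `x·ζ` lies below the limit `E` of the `x·ζ₁⋯ζₙ`, whose prefixes divide these heaps; so a
divisor `x·z` of a prefix of `x·ζ` divides some `x·ζ₁⋯ζₙ`, and `x` cancels. -/
lemma concB_mem_cyl_mul_iff (x : Heap I) (ζ : Bnd I) (z : Heap I) :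
    concB x ζ ∈ cyl (x * z) ↔ ζ ∈ cyl z := by
  set u : ℕ → Heap I := fun n => x * ppSeq ζ.1 n
  have hu : ∀ m n, m ≤ n → u m ∣ u n := fun m n h => mul_dvd_mul_left x (ppSeq_dvd_ppSeq _ h)
  have hlen : ∀ n, n ≤ len (u n) := fun n =>
    (le_len_ppSeq ζ.2.1 n).trans (by rw [len_mul]; exact Nat.le_add_left _ _)
  obtain ⟨E, hE⟩ := exists_bnd_eventually_ppSeq_eq hCF hu hlen
  have hC : IsConc x ζ (.inr (concB x ζ)) := by
    rw [concB, dif_pos (hconc x ζ)]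
    exact (hconc x ζ).choose_spec
  have hupper : ∀ n, mLe (.inl (x * pp (.inr ζ) n)) (.inr E) := fun n => by
    obtain ⟨M, hM⟩ := eventually_atTop.mp (eventually_ppSeq_cf_eq hCF (u n))
    obtain ⟨n', hn', hnn'⟩ := ((hE M).and (eventually_ge_atTop n)).exists
    refine (mem_cyl_iff hCF).mpr ⟨M, ?_⟩
    rw [← hn']
    exact (dvd_of_eq (hM M le_rfl).symm).trans (ppSeq_cf_dvd_ppSeq_cf hCF (hu n n' hnn') M)
  have hle : ∀ m, ppSeq (concB x ζ).1 m ∣ ppSeq E.1 m := hC.2 _ hupper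
  constructor
  · intro h
    obtain ⟨m, hm⟩ := (mem_cyl_iff hCF).mp h
    obtain ⟨n, hn⟩ := (hE m).exists
    refine (mem_cyl_iff hCF).mpr ⟨n, dvd_of_mul_dvd_mul_left (x := x) ?_⟩
    exact hm.trans ((hle m).trans ((dvd_of_eq hn.symm).trans (ppSeq_cf_dvd hCF (u n) m)))
  · intro h
    obtain ⟨n, hn⟩ := (mem_cyl_iff hCF).mp h
    exact cyl_subset_cyl hCF (mul_dvd_mul_left x hn) (hC.1 n)

lemma subB_eq_self_of_notMem {x : Heap I} {η : Bnd I} (hη : η ∉ cyl x) : subB η x = η := by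
  rw [subB, dif_neg]
  rintro ⟨ζ, rfl⟩
  have := (concB_mem_cyl_mul_iff hCF hconc x ζ 1).mpr (mem_cyl_one hCF ζ)
  rw [mul_one] at this
  exact hη this

variable (hconcInj : ∀ (x : Heap I) (ζ ζ' : Bnd I), concB x ζ = concB x ζ' → ζ = ζ')
  (hsubEx : ∀ (x : Heap I) (ξ : Bnd I), ξ ∈ cyl x → ∃ ζ : Bnd I, concB x ζ = ξ)
include hconcInj hsubEx

lemma subB_mem_cyl_iff {x : Heap I} {η : Bnd I} (hη : η ∈ cyl x) (z : Heap I) :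
    subB η x ∈ cyl z ↔ η ∈ cyl (x * z) := by
  obtain ⟨ζ, rfl⟩ := hsubEx x η hη
  have hsub : subB (concB x ζ) x = ζ := by
    have hex : ∃ ζ', concB x ζ' = concB x ζ := ⟨ζ, rfl⟩
    rw [subB, dif_pos hex]
    exact hconcInj x _ _ hex.choose_spec
  rw [hsub, concB_mem_cyl_mul_iff hCF hconc]

lemma preimage_subB_cyl (x z : Heap I) :
    (fun η => subB η x) ⁻¹' cyl z = cyl (x * z) ∪ (cyl z \ cyl x) := by
  ext η
  by_cases hη : η ∈ cyl x
  · simp [subB_mem_cyl_iff hCF hconc hconcInj hsubEx hη, hη]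
  · have hxz : η ∉ cyl (x * z) := fun h => hη (cyl_subset_cyl hCF (dvd_mul_right x z) h)
    simp [subB_eq_self_of_notMem hCF hconc hη, hη, hxz]

end Concatenation

section Bernoulli

instance [Countable S] : Countable (Heap I) :=
  have : Countable (FreeMonoid S) := inferInstanceAs (Countable (List S))
  (Con.mk'_surjective (c := HeapCon I)).countable

lemma measurableSet_cyl (x : Heap I) : MeasurableSet (cyl x) :=
  MeasurableSpace.measurableSet_generateFrom ⟨x, rfl⟩

variable [Fintype S] [Std.Symm I] [Std.Irrefl I]
  (hCF : ∀ x : Heap I, ∃! c : ℕ → Cl I, CFprop I c x)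
  (hconc : ∀ (x : Heap I) (ξ : Bnd I), ∃ ζ : Bnd I, IsConc x ξ (Sum.inr ζ))
  (hconcInj : ∀ (x : Heap I) (ζ ζ' : Bnd I), concB x ζ = concB x ζ' → ζ = ζ')
  (hsubEx : ∀ (x : Heap I) (ξ : Bnd I), ξ ∈ cyl x → ∃ ζ : Bnd I, concB x ζ = ξ)
include hCF hconc hconcInj hsubEx

lemma measurable_subB (x : Heap I) : Measurable fun η => subB η x := by
  refine measurable_generateFrom fun _ ⟨z, hz⟩ => ?_
  rw [hz, preimage_subB_cyl hCF hconc hconcInj hsubEx]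
  exact (measurableSet_cyl _).union ((measurableSet_cyl z).diff (measurableSet_cyl x))

lemma map_subB_restrict_cyl {P : Measure (Bnd I)} (hP : IsBernoulli P) (x : Heap I) :
    (P.restrict (cyl x)).map (fun η => subB η x) = P (cyl x) • P := by
  have := hP.1
  have hm := measurable_subB hCF hconc hconcInj hsubEx x
  refine ext_of_generate_finite _ rfl (isPiSystem_cyl hCF) ?_ ?_
  · rintro _ ⟨z, rfl⟩
    have hxz : cyl (x * z) ⊆ cyl x := cyl_subset_cyl hCF (dvd_mul_right x z)
    rw [Measure.map_apply hm (measurableSet_cyl z), Measure.restrict_apply' (measurableSet_cyl x),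
      preimage_subB_cyl hCF hconc hconcInj hsubEx, union_inter_distrib_right,
      inter_eq_left.mpr hxz, sdiff_inter_self, union_empty, hP.2.1, Measure.smul_apply,
      smul_eq_mul]
  · rw [Measure.map_apply hm .univ, preimage_univ, Measure.restrict_apply_univ,
      Measure.smul_apply, measure_univ, smul_eq_mul, mul_one]

end Bernoulli

def finiteValues (V : Bnd I → MB I) : Set (Heap I) := {x | ∃ ξ, V ξ = .inl x}

lemma astSA_eq_generateFrom (V : Bnd I → MB I) :
    astSA V = MeasurableSpace.generateFrom (range fun x : finiteValues V => cyl x.1) := by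
  refine congrArg MeasurableSpace.generateFrom (Set.ext fun A => ?_)
  constructor
  · rintro ⟨x, hx, rfl⟩
    exact ⟨⟨x, hx⟩, rfl⟩
  · rintro ⟨x, rfl⟩
    exact ⟨x.1, x.2, rfl⟩

namespace IsAST

variable {V : Bnd I → MB I} (hV : IsAST V)
include hV

lemma mem_cyl {ξ : Bnd I} {x : Heap I} (hx : V ξ = .inl x) : ξ ∈ cyl x := by
  have := hV.1 ξ
  rwa [hx] at this

lemma eq_of_mem_cyl {x : Heap I} (hx : x ∈ finiteValues V) {ξ : Bnd I} (hξ : ξ ∈ cyl x) :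
    V ξ = .inl x :=
  (hV.2 _ ξ x hx.choose_spec hξ).trans hx.choose_spec

lemma pairwise_disjoint_cyl : Pairwise (Disjoint on fun x : finiteValues V => cyl x.1) :=
  fun x y hxy => disjoint_left.mpr fun _ hx hy => hxy <| Subtype.ext <|
    Sum.inl_injective ((hV.eq_of_mem_cyl x.2 hx).symm.trans (hV.eq_of_mem_cyl y.2 hy))

lemma extShift_eqOn (ψ : Bnd I → ℝ) (x : finiteValues V) :
    EqOn (extShift V ψ) (ψ ∘ fun η => subB η x.1) (cyl x.1) := fun ξ hξ => by
  simp only [extShift, shiftV, hV.eq_of_mem_cyl x.2 hξ, comp_apply]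

lemma extShift_eqOn_compl (ψ : Bnd I → ℝ) :
    EqOn (extShift V ψ) 0 (⋃ x : finiteValues V, cyl x.1)ᶜ := fun ξ hξ => by
  unfold extShift
  cases hVξ : V ξ with
  | inl x => exact (hξ (mem_iUnion_of_mem (⟨x, ξ, hVξ⟩ : finiteValues V) (hV.mem_cyl hVξ))).elim
  | inr _ => rfl

end IsAST

section StrongBernoulli

variable [Fintype S] [Std.Symm I] [Std.Irrefl I]
  (hCF : ∀ x : Heap I, ∃! c : ℕ → Cl I, CFprop I c x)
  (hconc : ∀ (x : Heap I) (ξ : Bnd I), ∃ ζ : Bnd I, IsConc x ξ (Sum.inr ζ))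
  (hconcInj : ∀ (x : Heap I) (ζ ζ' : Bnd I), concB x ζ = concB x ζ' → ζ = ζ')
  (hsubEx : ∀ (x : Heap I) (ξ : Bnd I), ξ ∈ cyl x → ∃ ζ : Bnd I, concB x ζ = ξ)
  {P : Measure (Bnd I)} (hP : IsBernoulli P) {V : Bnd I → MB I} (hV : IsAST V)
  {ψ : Bnd I → ℝ} (hψ : Measurable ψ)
include hCF hconc hconcInj hsubEx hV hψ

lemma measurable_extShift : Measurable (extShift V ψ) :=
  measurable_of_eqOn_iUnion (C := fun x : finiteValues V => cyl x.1)
    (fun x => measurableSet_cyl x.1)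
    (fun x => hψ.comp (measurable_subB hCF hconc hconcInj hsubEx x.1)) (hV.extShift_eqOn ψ)
    (hV.extShift_eqOn_compl ψ)

include hP

lemma lintegral_enorm_extShift :
    ∫⁻ ξ, ‖extShift V ψ ξ‖ₑ ∂P = P (⋃ x : finiteValues V, cyl x.1) * ∫⁻ ξ, ‖ψ ξ‖ₑ ∂P :=
  lintegral_enorm_of_eqOn_comp (C := fun x : finiteValues V => cyl x.1)
    (fun x => measurableSet_cyl x.1) hV.pairwise_disjoint_cyl
    (fun x => measurable_subB hCF hconc hconcInj hsubEx x.1)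
    (fun x => map_subB_restrict_cyl hCF hconc hconcInj hsubEx hP x.1) hψ (hV.extShift_eqOn ψ)
    (hV.extShift_eqOn_compl ψ)

lemma integrable_extShift (hint : Integrable ψ P) : Integrable (extShift V ψ) P := by
  have := hP.1
  refine ⟨(measurable_extShift hCF hconc hconcInj hsubEx hV hψ).aestronglyMeasurable, ?_⟩
  rw [HasFiniteIntegral, lintegral_enorm_extShift hCF hconc hconcInj hsubEx hP hV hψ]
  exact ENNReal.mul_lt_top (measure_lt_top _ _) hint.2

lemma integrable_of_integrable_extShift {x : Heap I} (hx : x ∈ finiteValues V)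
    (hint : Integrable (extShift V ψ) P) : Integrable ψ P := by
  refine ⟨hψ.aestronglyMeasurable,
    ENNReal.lt_top_of_mul_ne_top_right (a := P (⋃ x : finiteValues V, cyl x.1)) ?_ ?_⟩
  · rw [← lintegral_enorm_extShift hCF hconc hconcInj hsubEx hP hV hψ]
    exact hint.2.ne
  · exact ((hP.2.2 x).trans_le (measure_mono (subset_iUnion_of_subset
      (⟨x, hx⟩ : finiteValues V) subset_rfl))).ne'

lemma condExp_extShift_ae_eq (hint : Integrable ψ P) :
    P[extShift V ψ | astSA V] =ᵐ[P]
      (⋃ x : finiteValues V, cyl x.1).indicator fun _ => ∫ ξ, ψ ξ ∂P := by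
  have := hP.1
  rw [astSA_eq_generateFrom]
  refine condExp_generateFrom_range_ae_eq (C := fun x : finiteValues V => cyl x.1)
    (fun x => measurableSet_cyl x.1) hV.pairwise_disjoint_cyl
    (integrable_extShift hCF hconc hconcInj hsubEx hP hV hψ hint)
    (hV.extShift_eqOn_compl ψ) fun x => ?_
  rw [setIntegral_congr_fun (measurableSet_cyl x.1) (hV.extShift_eqOn ψ x)]
  exact setIntegral_comp_of_map_restrict (measurable_subB hCF hconc hconcInj hsubEx x.1)
    (map_subB_restrict_cyl hCF hconc hconcInj hsubEx hP x.1) hψ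

end StrongBernoulli

theorem strong_bernoulli_property_general
    {S : Type} [Fintype S] (I : S → S → Prop)
    (hsymm : ∀ a b : S, I a b → I b a)
    (hirr : ∀ a : S, ¬ I a a)
    (hCF : ∀ x : Heap I, ∃! c : ℕ → Cl I, CFprop I c x)
    (hconc : ∀ (x : Heap I) (ξ : Bnd I), ∃ ζ : Bnd I, IsConc x ξ (Sum.inr ζ))
    (hconcInj : ∀ (x : Heap I) (ζ ζ' : Bnd I), concB x ζ = concB x ζ' → ζ = ζ')
    (hsubEx : ∀ (x : Heap I) (ξ : Bnd I), ξ ∈ cyl x → ∃ ζ : Bnd I, concB x ζ = ξ)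
    (P : Measure (Bnd I)) (hP : IsBernoulli P)
    (V : Bnd I → MB I) (hV : IsAST V)
    (ψ : Bnd I → ℝ) (hψm : Measurable ψ) :
    ∀ᵐ ξ ∂P, (∃ x : Heap I, V ξ = Sum.inl x) →
      (P[extShift V ψ|astSA V]) ξ = ∫ η, ψ η ∂P := by
  have : Std.Symm I := ⟨hsymm⟩
  have : Std.Irrefl I := ⟨hirr⟩
  by_cases hψ : Integrable ψ P
  · filter_upwards [condExp_extShift_ae_eq hCF hconc hconcInj hsubEx hP hV hψm hψ]
      with ξ hξ ⟨x, hx⟩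
    rw [hξ, indicator_of_mem (mem_iUnion_of_mem (⟨x, ξ, hx⟩ : finiteValues V) (hV.mem_cyl hx))]
  · refine .of_forall fun ξ ⟨x, hx⟩ => ?_
    rw [condExp_of_not_integrable fun hint => hψ <| integrable_of_integrable_extShift
      hCF hconc hconcInj hsubEx hP hV hψm ⟨ξ, hx⟩ hint, integral_undef hψ, Pi.zero_apply]

theorem strong_bernoulli_property
    {S : Type} [Fintype S] [DecidableEq S] (I : S → S → Prop)
    (hsymm : ∀ a b : S, I a b → I b a)
    (hirr : ∀ a : S, ¬ I a a)
    (hconn : ∀ a b : S, Relation.ReflTransGen (fun x y : S => x ≠ y ∧ ¬ I x y) a b)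
    (hcard : 1 < Fintype.card S)
    (hCF : ∀ x : Heap I, ∃! c : ℕ → Cl I, CFprop I c x)
    (hconc : ∀ (x : Heap I) (ξ : Bnd I), ∃ ζ : Bnd I, IsConc x ξ (Sum.inr ζ))
    (hconcInj : ∀ (x : Heap I) (ζ ζ' : Bnd I), concB x ζ = concB x ζ' → ζ = ζ')
    (hsubEx : ∀ (x : Heap I) (ξ : Bnd I), ξ ∈ cyl x → ∃ ζ : Bnd I, concB x ζ = ξ)
    (P : Measure (Bnd I)) (hP : IsBernoulli P)
    (V : Bnd I → MB I) (hV : IsAST V)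
    (ψ : Bnd I → ℝ) (hψm : Measurable ψ)
    (hψ : (∀ ξ : Bnd I, 0 ≤ ψ ξ) ∨ Integrable ψ P) :
    ∀ᵐ ξ ∂P, (∃ x : Heap I, V ξ = Sum.inl x) →
      (P[extShift V ψ|astSA V]) ξ = ∫ η, ψ η ∂P :=
  strong_bernoulli_property_general I hsymm hirr hCF hconc hconcInj hsubEx P hP V hV ψ hψm

end HeapPaper
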